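/- arXiv:2101.12542 — 2 statements merged into one kernel-verified Lean document; each statement's English description precedes it below -/
import Mathlib

section
/- Let X, Z be real Banach spaces, S ⊆ X a nonempty closed set, C ⊆ Z a proper closed convex cone with C ≠ {0}, and G : X ⇉ Z with G(x) ≠ ∅ for all x. Let R = S ∩ {x : G(x) ⊆ C} and x̄ ∈ R. Suppose that (i) G is lower semicontinuous at every point of some ball around x̄; (ii) G is metrically C-increasing around x̄ relative to S; (iii) G admits a positively homogeneous set-valued mapping H : X ⇉ Z as an outer prederivative at x̄; (iv) H is Lipschitz with respect to the Hausdorff distance. Then H⁺¹(C) ∩ T(S,x̄) ⊆ T(R,x̄), where H⁺¹(C) = {v : H(v) ⊆ C} and T(A,x̄) denotes the contingent cone to A at x̄. -/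
open Filter Topology Metric Set Pointwise
open scoped ENNReal NNReal

noncomputable section

/-- The `r`-enlargement `B(A,r)` of a set `A`. -/
def enlarge {Z : Type*} [SeminormedAddCommGroup Z] (A : Set Z) (r : ℝ) : Set Z :=
  {z | Metric.infDist z A ≤ r}

/-- Merit function `ν(x) = sup_{z ∈ G(x)} dist(z, C)`, with values in `[0,∞]`. -/
def merit {X Z : Type*} [SeminormedAddCommGroup Z] (G : X → Set Z) (C : Set Z) (x : X) : ℝ≥0∞ :=
  ⨆ z ∈ G x, ENNReal.ofReal (Metric.infDist z C)

/-- Lower semicontinuity of a set-valued map at a point. -/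
def LscAt {X Z : Type*} [TopologicalSpace X] [TopologicalSpace Z] (G : X → Set Z) (x : X) : Prop :=
  ∀ V : Set Z, IsOpen V → (G x ∩ V).Nonempty → ∃ U ∈ nhds x, ∀ u ∈ U, (G u ∩ V).Nonempty

/-- `G` is l.s.c. at every point of some ball around `xb`. -/
def LscAround {X Z : Type*} [SeminormedAddCommGroup X] [TopologicalSpace Z]
    (G : X → Set Z) (xb : X) : Prop :=
  ∃ ρ > 0, ∀ x ∈ Metric.closedBall xb ρ, LscAt G x

/-- `G` is metrically `C`-increasing around `xb` relative to `S`, with witnesses `α > 1`, `δ > 0`. -/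
def MetIncrWith {X Z : Type*} [SeminormedAddCommGroup X] [SeminormedAddCommGroup Z]
    (G : X → Set Z) (S : Set X) (C : Set Z) (xb : X) (α δ : ℝ) : Prop :=
  ∀ x ∈ Metric.closedBall xb δ ∩ S, ∀ r ∈ Set.Ioo (0:ℝ) δ,
    ∃ z ∈ Metric.closedBall x r ∩ S, enlarge (G z) (α * r) ⊆ enlarge (G x + C) r

/-- `G` is metrically `C`-increasing around `xb` relative to `S`. -/
def MetIncr {X Z : Type*} [SeminormedAddCommGroup X] [SeminormedAddCommGroup Z]
    (G : X → Set Z) (S : Set X) (C : Set Z) (xb : X) : Prop :=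
  ∃ α > 1, ∃ δ > 0, MetIncrWith G S C xb α δ

/-- The exact bound of metric `C`-increase of `G` around `xb`, relative to `S`. -/
def incrBound {X Z : Type*} [SeminormedAddCommGroup X] [SeminormedAddCommGroup Z]
    (G : X → Set Z) (S : Set X) (C : Set Z) (xb : X) : ℝ≥0∞ :=
  sSup {a : ℝ≥0∞ | ∃ α : ℝ, a = ENNReal.ofReal α ∧ 1 < α ∧ ∃ δ > 0, MetIncrWith G S C xb α δ}

open Classical in
/-- Strong slope of `φ` relative to `S` at `x`: `0` if `x` is a local minimizer of `φ` on `S`,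
otherwise `inf_{r>0} sup_{z ∈ B(x,r)∩S, z ≠ x} (φ(x) − φ(z))/‖x−z‖`. -/
def strongSlope {X : Type*} [SeminormedAddCommGroup X] (φ : X → ℝ≥0∞) (S : Set X) (x : X) :
    ℝ≥0∞ :=
  if ∃ r > 0, ∀ z ∈ S ∩ Metric.closedBall x r, φ x ≤ φ z then 0
  else ⨅ r ∈ Set.Ioi (0:ℝ), ⨆ z ∈ (S ∩ Metric.closedBall x r) \ {x},
    (φ x - φ z) / ENNReal.ofReal ‖x - z‖

/-- `ψ` is a local error bound function for `R` near `xb`, relative to `S`. -/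
def LocErrBoundFun {X : Type*} [SeminormedAddCommGroup X]
    (ψ : X → ℝ≥0∞) (R S : Set X) (xb : X) : Prop :=
  ∃ δ > 0, (∀ x ∈ Metric.closedBall xb δ ∩ S, ENNReal.ofReal (Metric.infDist x R) ≤ ψ x) ∧
    ∀ x ∈ R, ψ x = ENNReal.ofReal (Metric.infDist x R)

/-- `f` is `K`-Lipschitz near `xb` with constant `ℓ` and vector `e`. -/
def KLipschitzNearWith {X Y : Type*} [SeminormedAddCommGroup X] [SeminormedAddCommGroup Y]
    [NormedSpace ℝ Y] (f : X → Y) (K : Set Y) (xb : X) (ℓ : ℝ) (e : Y) : Prop :=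
  ∃ δ > 0, ∀ x₁ ∈ Metric.closedBall xb δ, ∀ x₂ ∈ Metric.closedBall xb δ,
    f x₁ - f x₂ + (ℓ * ‖x₁ - x₂‖) • e ∈ K

/-- `xb` is a locally weakly efficient solution of minimizing `f` over `R`
(w.r.t. the ordering cone `K`). -/
def LocWeakEffOn {X Y : Type*} [SeminormedAddCommGroup X] [SeminormedAddCommGroup Y]
    (f : X → Y) (R : Set X) (K : Set Y) (xb : X) : Prop :=
  ∃ δ > 0, ∀ x ∈ R ∩ Metric.closedBall xb δ, f xb - f x ∉ interior K

/-- `xb` is a locally efficient solution of minimizing `f` over `R`. -/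
def LocEffOn {X Y : Type*} [SeminormedAddCommGroup X] [SeminormedAddCommGroup Y]
    (f : X → Y) (R : Set X) (K : Set Y) (xb : X) : Prop :=
  ∃ δ > 0, ∀ x ∈ R ∩ Metric.closedBall xb δ, f xb - f x ∈ K → f x = f xb

/-- Contingent (Bouligand tangent) cone to `A` at `xb`. -/
def contingentCone {X : Type*} [SeminormedAddCommGroup X] [NormedSpace ℝ X]
    (A : Set X) (xb : X) : Set X :=
  {v | ∃ (vn : ℕ → X) (tn : ℕ → ℝ), Filter.Tendsto vn Filter.atTop (nhds v) ∧
    Filter.Tendsto tn Filter.atTop (nhds 0) ∧ (∀ n, 0 < tn n) ∧ ∀ n, xb + tn n • vn n ∈ A}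

/-- Feasible direction cone to `A` at `xb`. -/
def feasDirCone {X : Type*} [SeminormedAddCommGroup X] [NormedSpace ℝ X]
    (A : Set X) (xb : X) : Set X :=
  {v | ∃ δ > 0, ∀ t ∈ Set.Ioo (0:ℝ) δ, xb + t • v ∈ A}

/-- Weak feasible direction cone to `A` at `xb`. -/
def weakFeasDirCone {X : Type*} [SeminormedAddCommGroup X] [NormedSpace ℝ X]
    (A : Set X) (xb : X) : Set X :=
  {v | ∀ ε > 0, ∃ t ∈ Set.Ioo (0:ℝ) ε, xb + t • v ∈ A}

/-- Fréchet upper subdifferential of an `[0,∞]`-valued function `φ` (finite at `xb`) at `xb`. -/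
def FUpperSubdiff {X : Type*} [NormedAddCommGroup X] [NormedSpace ℝ X]
    (φ : X → ℝ≥0∞) (xb : X) : Set (X →L[ℝ] ℝ) :=
  {p | ∀ ε > 0, ∃ δ > 0, ∀ x ∈ Metric.ball xb δ, x ≠ xb →
    φ x ≠ ⊤ ∧ (φ x).toReal - (φ xb).toReal - p (x - xb) ≤ ε * ‖x - xb‖}

/-- `d` is the directional derivative of `f` at `xb` in direction `v`. -/
def HasDirDerivAt {X Y : Type*} [SeminormedAddCommGroup X] [NormedSpace ℝ X]
    [SeminormedAddCommGroup Y] [NormedSpace ℝ Y] (f : X → Y) (xb v : X) (d : Y) : Prop :=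
  Filter.Tendsto (fun t : ℝ => t⁻¹ • (f (xb + t • v) - f xb)) (nhdsWithin 0 (Set.Ioi 0)) (nhds d)

/-- `H` is an outer prederivative of `G` at `xb`. -/
def OuterPrederivAt {X Z : Type*} [SeminormedAddCommGroup X] [NormedSpace ℝ X]
    [SeminormedAddCommGroup Z] [NormedSpace ℝ Z] (G H : X → Set Z) (xb : X) : Prop :=
  (∀ t : ℝ, 0 < t → ∀ v, H (t • v) = t • H v) ∧
  ∀ ε > 0, ∃ δ > 0, ∀ x ∈ Metric.closedBall xb δ,
    G x ⊆ G xb + H (x - xb) + Metric.closedBall 0 (ε * ‖x - xb‖)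

/-- `H` is Lipschitz with respect to the Hausdorff distance. -/
def HausLipschitz {X Z : Type*} [SeminormedAddCommGroup X] [SeminormedAddCommGroup Z]
    (H : X → Set Z) : Prop :=
  ∃ l : ℝ, 0 ≤ l ∧ ∀ x₁ x₂ : X,
    EMetric.hausdorffEdist (H x₁) (H x₂) ≤ ENNReal.ofReal (l * ‖x₁ - x₂‖)

/-- `h` is the B-derivative of `f` at `xb`. -/
def IsBDerivAt {X Y : Type*} [NormedAddCommGroup X] [NormedSpace ℝ X]
    [NormedAddCommGroup Y] [NormedSpace ℝ Y] (f : X → Y) (h : X → Y) (xb : X) : Prop :=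
  Continuous h ∧ (∀ t : ℝ, 0 < t → ∀ v, h (t • v) = t • h v) ∧
  Filter.Tendsto (fun x => ‖x - xb‖⁻¹ • (f x - f xb - h (x - xb)))
    (nhdsWithin xb {xb}ᶜ) (nhds 0)

/-- Upper inverse image `H⁺¹(C)` of `C` through `H`. -/
def upperInv {X Z : Type*} (H : X → Set Z) (C : Set Z) : Set X := {x | H x ⊆ C}

end

/-!
A direction `v` with `H v ⊆ C` that is tangent to `S` is realised by points `x̄ + tₙ vₙ ∈ S`
with `tₙ ↓ 0`. The outer prederivative and the Hausdorff-Lipschitz continuity of `H` put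
`G (x̄ + tₙ vₙ)` within `o(tₙ)` of `C`. Metric `C`-increase turns this into an error bound: if
`G x` lies within `(α - 1) ρ` of `C`, the point `z ∈ S` it provides within `ρ` of `x` has
`G z ⊆ C`. Otherwise a closed ball of radius `αρ` about some `w ∈ G z \ C` would stay within
`αρ` of `C`, while a functional separating `w` from the cone shows `dist(w, C) + αρ ≤ αρ`.
Hence `dist(x̄ + tₙ vₙ, R) = o(tₙ)`, and `v` is tangent to `R`.
-/

theorem subset_enlarge_of_hausdorffEDist_le {E : Type*} [SeminormedAddCommGroup E]
    {A B K : Set E} {m : ℝ} (hm : 0 ≤ m) (hAB : hausdorffEDist A B ≤ ENNReal.ofReal m)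
    (hBK : B ⊆ K) : A ⊆ enlarge K m := by
  intro a ha
  refine ENNReal.toReal_le_of_le_ofReal hm ?_
  calc infEDist a K ≤ infEDist a B := infEDist_anti hBK
    _ ≤ infEDist a A + hausdorffEDist A B := infEDist_le_infEDist_add_hausdorffEDist
    _ ≤ ENNReal.ofReal m := by rw [infEDist_zero_of_mem ha, zero_add]; exact hAB

section Cone

variable {E : Type*} [NormedAddCommGroup E] [NormedSpace ℝ E]

theorem ContinuousLinearMap.opNorm_le_of_apply_le_on_unit_ball {f : StrongDual ℝ E} {b : ℝ}
    (h : ∀ e, ‖e‖ < 1 → f e ≤ b) : ‖f‖ ≤ b := by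
  by_contra! hb
  obtain ⟨e, he, hfe⟩ := f.exists_lt_apply_of_lt_opNorm hb
  rcases lt_abs.1 hfe with hfe | hfe
  · linarith [h e he]
  · linarith [h (-e) (by rwa [norm_neg]), map_neg f e]

namespace ConvexCone

variable (K : ConvexCone ℝ E)

theorem infDist_add_le {c : E} (hc : c ∈ K) (u : E) : infDist (u + c) K ≤ infDist u K := by
  rcases (K : Set E).eq_empty_or_nonempty with hK | hK
  · simp [hK]
  exact (le_infDist hK).2 fun y hy =>
    (infDist_le_dist_of_mem (K.add_mem hy hc)).trans_eq (dist_add_right u y c)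

theorem infDist_smul_le {t : ℝ} (ht : 0 < t) (u : E) : infDist (t • u) K ≤ t * infDist u K := by
  rcases (K : Set E).eq_empty_or_nonempty with hK | hK
  · simp [hK]
  calc infDist (t • u) K ≤ infDist (t • u) (t • (K : Set E)) :=
        infDist_le_infDist_of_subset (by rintro _ ⟨y, hy, rfl⟩; exact K.smul_mem ht hy)
          (hK.smul_set)
    _ = t * infDist u K := by rw [infDist_smul₀ ht.ne', Real.norm_of_nonneg ht.le]

theorem smul_subset_enlarge {A : Set E} {β t : ℝ} (ht : 0 < t) (hA : A ⊆ enlarge K β) :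
    t • A ⊆ enlarge K (t * β) := by
  rintro _ ⟨a, ha, rfl⟩
  exact (K.infDist_smul_le ht a).trans (mul_le_mul_of_nonneg_left (hA ha) ht.le)

theorem add_add_closedBall_subset_enlarge {A B : Set E} {β r : ℝ} (hA : A ⊆ K)
    (hB : B ⊆ enlarge K β) : A + B + closedBall 0 r ⊆ enlarge K (β + r) := by
  rintro _ ⟨_, ⟨a, ha, b, hb, rfl⟩, e, he, rfl⟩
  have hb' : infDist b K ≤ β := hB hb
  have he' : ‖e‖ ≤ r := mem_closedBall_zero_iff.1 he
  have := infDist_le_infDist_add_dist (x := a + b + e) (y := a + b) (s := (K : Set E))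
  rw [dist_eq_norm, add_sub_cancel_left] at this
  have hab := K.infDist_add_le (hA ha) b
  rw [add_comm b a] at hab
  change infDist (a + b + e) K ≤ β + r
  linarith

theorem enlarge_add_subset (hK : (K : Set E).Nonempty) {A : Set E} {m : ℝ} (hA : A.Nonempty)
    (hAK : A ⊆ enlarge K m) (r : ℝ) : enlarge (A + (K : Set E)) r ⊆ enlarge K (r + m) := by
  intro ζ hζ
  have hζ' : infDist ζ (A + K) ≤ r := hζ
  have : infDist ζ K - m ≤ infDist ζ (A + K) := by
    refine (le_infDist (hA.add hK)).2 ?_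
    rintro _ ⟨a, ha, c, hc, rfl⟩
    have ha' : infDist a K ≤ m := hAK ha
    linarith [infDist_le_infDist_add_dist (x := ζ) (y := a + c) (s := (K : Set E)),
      K.infDist_add_le hc a]
  change infDist ζ K ≤ r + m
  linarith

variable {K}

theorem exists_dual_of_infDist_pos (hK : K.Pointed) {w : E} (hw : 0 < infDist w K) :
    ∃ f : StrongDual ℝ E, ‖f‖ = 1 ∧ (∀ c ∈ K, 0 ≤ f c) ∧ infDist w K ≤ -f w := by
  set d := infDist w K
  obtain ⟨f, u, hball, hfK⟩ :=
    geometric_hahn_banach_open (convex_ball w d) isOpen_ball K.convex disjoint_ball_infDist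
  have hu : u ≤ 0 := by simpa using hfK 0 hK
  have hfK' : ∀ c ∈ K, 0 ≤ f c := by
    intro c hc
    by_contra! hfc
    have := hfK _ (K.smul_mem (div_pos_of_neg_of_neg (by linarith : u - 1 < 0) hfc) hc)
    rw [map_smul, smul_eq_mul, div_mul_cancel₀ _ hfc.ne] at this
    linarith
  have hfw : f w < 0 := (hball w (mem_ball_self hw)).trans_le hu
  have hfpos : 0 < ‖f‖ := norm_pos_iff.2 fun hf => by simp [hf] at hfw
  have hdf : ‖d • f‖ ≤ -f w := by
    refine ContinuousLinearMap.opNorm_le_of_apply_le_on_unit_ball fun e he => ?_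
    have hmem : w + d • e ∈ ball w d := by
      rw [mem_ball, dist_eq_norm, add_sub_cancel_left, norm_smul, Real.norm_of_nonneg hw.le]
      exact mul_lt_of_lt_one_right hw he
    have := (hball _ hmem).trans_le hu
    simp only [map_add, map_smul, smul_eq_mul, smul_apply] at this ⊢
    linarith
  rw [norm_smul, Real.norm_of_nonneg hw.le] at hdf
  refine ⟨‖f‖⁻¹ • f, by rw [norm_smul, norm_inv, norm_norm, inv_mul_cancel₀ hfpos.ne'],
    fun c hc => mul_nonneg (inv_nonneg.2 hfpos.le) (hfK' c hc), ?_⟩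
  rw [smul_apply, smul_eq_mul, inv_mul_eq_div, ← neg_div, le_div_iff₀ hfpos]
  exact hdf

theorem infDist_add_le_of_closedBall_subset (hK : K.Pointed) {w : E} (hw : 0 < infDist w K)
    {s M : ℝ} (hs : 0 ≤ s) (h : closedBall w s ⊆ enlarge K M) : infDist w K + s ≤ M := by
  obtain ⟨f, hf1, hfK, hfw⟩ := exists_dual_of_infDist_pos hK hw
  have hlower : ∀ y, -f y ≤ infDist y K := fun y => (le_infDist ⟨0, hK⟩).2 fun c hc =>
    calc -f y ≤ f (c - y) := by rw [map_sub]; linarith [hfK c hc]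
      _ ≤ ‖c - y‖ := (Real.le_norm_self _).trans ((f.le_of_opNorm_le hf1.le _).trans_eq
          (one_mul _))
      _ = dist y c := by rw [dist_comm, dist_eq_norm]
  have hsf : ‖s • f‖ ≤ M - infDist w K := by
    refine ContinuousLinearMap.opNorm_le_of_apply_le_on_unit_ball fun e he => ?_
    have hy : w - s • e ∈ closedBall w s := by
      rw [mem_closedBall, dist_eq_norm, sub_sub_cancel_left, norm_neg, norm_smul,
        Real.norm_of_nonneg hs]
      exact mul_le_of_le_one_right hs he.le
    have hM : infDist (w - s • e) K ≤ M := h hy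
    have := hlower (w - s • e)
    simp only [map_sub, map_smul, smul_eq_mul, smul_apply] at this ⊢
    linarith
  rw [norm_smul, hf1, Real.norm_of_nonneg hs, mul_one] at hsf
  linarith

end ConvexCone

end Cone

theorem MetIncrWith.infDist_le {X E : Type*} [NormedAddCommGroup X] [NormedAddCommGroup E]
    [NormedSpace ℝ E] {G : X → Set E} {S : Set X} {K : ConvexCone ℝ E} {xb : X} {α δ : ℝ}
    (hG : MetIncrWith G S K xb α δ) (hKcl : IsClosed (K : Set E)) (hK : K.Pointed) {x : X}
    (hx : x ∈ closedBall xb δ ∩ S) (hGx : (G x).Nonempty) {ρ : ℝ} (hρ : ρ ∈ Ioo 0 δ)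
    (hGxK : G x ⊆ enlarge K ((α - 1) * ρ)) : infDist x (S ∩ {y | G y ⊆ K}) ≤ ρ := by
  obtain ⟨z, ⟨hzx, hzS⟩, hz⟩ := hG x hx ρ hρ
  suffices hzK : G z ⊆ K by
    have hzR : z ∈ S ∩ {y | G y ⊆ (K : Set E)} := ⟨hzS, hzK⟩
    exact (infDist_le_dist_of_mem hzR).trans (by rwa [dist_comm])
  have hαρ : 0 ≤ α * ρ := by
    obtain ⟨u, hu⟩ := hGx
    have : infDist u K ≤ (α - 1) * ρ := hGxK hu
    linarith [infDist_nonneg (x := u) (s := (K : Set E)), hρ.1]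
  intro w hw
  by_contra hwK
  have hpos : 0 < infDist w K := (hKcl.notMem_iff_infDist_pos ⟨0, hK⟩).1 hwK
  have hball : closedBall w (α * ρ) ⊆ enlarge K (α * ρ) :=
    calc closedBall w (α * ρ) ⊆ enlarge (G z) (α * ρ) := fun y hy =>
          (infDist_le_dist_of_mem hw).trans hy
      _ ⊆ enlarge (G x + K) ρ := hz
      _ ⊆ enlarge K (ρ + (α - 1) * ρ) := K.enlarge_add_subset ⟨0, hK⟩ hGx hGxK ρ
      _ = enlarge K (α * ρ) := by ring_nf
  linarith [ConvexCone.infDist_add_le_of_closedBall_subset hK hpos hαρ hball]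

section Tangent

variable {X : Type*} [NormedAddCommGroup X] [NormedSpace ℝ X] {xb v : X} {vn : ℕ → X}
  {tn : ℕ → ℝ}

theorem eventually_add_smul_mem_closedBall (hvn : Tendsto vn atTop (𝓝 v))
    (htn : Tendsto tn atTop (𝓝 0)) {δ : ℝ} (hδ : 0 < δ) :
    ∀ᶠ n in atTop, xb + tn n • vn n ∈ closedBall xb δ := by
  have : Tendsto (fun n => xb + tn n • vn n) atTop (𝓝 xb) := by
    simpa using tendsto_const_nhds.add (htn.smul hvn)
  exact this.eventually (closedBall_mem_nhds xb hδ)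

theorem OuterPrederivAt.eventually_subset_enlarge {E : Type*} [NormedAddCommGroup E]
    [NormedSpace ℝ E] {G H : X → Set E} {K : ConvexCone ℝ E} (hH : OuterPrederivAt G H xb)
    (hHL : HausLipschitz H) (hxb : G xb ⊆ K) (hv : H v ⊆ K) (hvn : Tendsto vn atTop (𝓝 v))
    (htn : Tendsto tn atTop (𝓝 0)) (htpos : ∀ n, 0 < tn n) {η : ℝ} (hη : 0 < η) :
    ∀ᶠ n in atTop, G (xb + tn n • vn n) ⊆ enlarge K (η * tn n) := by
  obtain ⟨hhom, happrox⟩ := hH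
  obtain ⟨l, hl, hLip⟩ := hHL
  set ε := η / (‖v‖ + 1)
  obtain ⟨δ, hδ, hGH⟩ := happrox ε (by positivity)
  have hlim : Tendsto (fun n => l * ‖vn n - v‖ + ε * ‖vn n‖) atTop (𝓝 (ε * ‖v‖)) := by
    simpa using ((hvn.sub_const v).norm.const_mul l).add (hvn.norm.const_mul ε)
  have hεv : ε * ‖v‖ < η := by
    rw [div_mul_eq_mul_div, div_lt_iff₀ (by positivity)]
    linarith
  filter_upwards [eventually_add_smul_mem_closedBall hvn htn hδ, hlim.eventually_lt_const hεv]
    with n hn hsmall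
  set t := tn n
  set u := vn n
  have ht := htpos n
  have hHu : H (t • u) ⊆ enlarge K (t * (l * ‖u - v‖)) := by
    rw [hhom t ht]
    exact K.smul_subset_enlarge ht
      (subset_enlarge_of_hausdorffEDist_le (by positivity) (hLip u v) hv)
  have hbound : t * (l * ‖u - v‖) + ε * ‖t • u‖ ≤ η * t := by
    rw [norm_smul, Real.norm_of_nonneg ht.le]
    nlinarith
  calc G (xb + t • u) ⊆ G xb + H (t • u) + closedBall 0 (ε * ‖t • u‖) := by
        simpa using hGH _ hn
    _ ⊆ enlarge K (t * (l * ‖u - v‖) + ε * ‖t • u‖) :=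
        K.add_add_closedBall_subset_enlarge hxb hHu
    _ ⊆ enlarge K (η * t) := fun z hz => le_trans hz hbound

theorem mem_contingentCone_of_eventually_infDist_le {A : Set X} (hA : A.Nonempty)
    (hvn : Tendsto vn atTop (𝓝 v)) (htn : Tendsto tn atTop (𝓝 0)) (htpos : ∀ n, 0 < tn n)
    (hdist : ∀ ε > 0, ∀ᶠ n in atTop, infDist (xb + tn n • vn n) A ≤ ε * tn n) :
    v ∈ contingentCone A xb := by
  -- near-minimisers up to `tₙ ^ 2`, an error that is `o(tₙ)`
  have hy : ∀ n, ∃ y ∈ A,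
      dist (xb + tn n • vn n) y < infDist (xb + tn n • vn n) A + tn n ^ 2 := fun n =>
    (infDist_lt_iff hA).1 (lt_add_of_pos_right _ (pow_pos (htpos n) 2))
  choose y hyA hyd using hy
  set wn := fun n => (tn n)⁻¹ • (y n - xb)
  have hwn : ∀ n, xb + tn n • wn n = y n := fun n => by
    simp [wn, smul_smul, mul_inv_cancel₀ (htpos n).ne']
  have hwv : ∀ n, wn n - vn n = (tn n)⁻¹ • (y n - (xb + tn n • vn n)) := fun n => by
    simp only [wn, smul_sub, smul_add, smul_smul, inv_mul_cancel₀ (htpos n).ne', one_smul]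
    abel
  have hclose : Tendsto (fun n => wn n - vn n) atTop (𝓝 0) := by
    rw [Metric.tendsto_nhds]
    intro ε hε
    filter_upwards [hdist (ε / 2) (half_pos hε), htn.eventually (gt_mem_nhds (half_pos hε))]
      with n hd ht
    rw [dist_zero_right, hwv, norm_smul, Real.norm_of_nonneg (inv_nonneg.2 (htpos n).le),
      ← dist_eq_norm, dist_comm, inv_mul_lt_iff₀ (htpos n)]
    nlinarith [hyd n, htpos n]
  exact ⟨wn, tn, by simpa using hclose.add hvn, htn, htpos, fun n => hwn n ▸ hyA n⟩

end Tangent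

theorem statement_9_general
    {X Z : Type*} [NormedAddCommGroup X] [NormedSpace ℝ X]
    [NormedAddCommGroup Z] [NormedSpace ℝ Z]
    (S : Set X)
    (C : Set Z) (hCcl : IsClosed C) (hCconv : Convex ℝ C)
    (hCcone : ∀ t : ℝ, 0 < t → ∀ z ∈ C, t • z ∈ C) (hC0 : (0:Z) ∈ C)
    (G : X → Set Z) (hG : ∀ x, (G x).Nonempty)
    (xb : X) (hxbS : xb ∈ S) (hxbG : G xb ⊆ C)
    (hmi : MetIncr G S C xb)
    (H : X → Set Z) (hH : OuterPrederivAt G H xb) (hHLip : HausLipschitz H) :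
    upperInv H C ∩ contingentCone S xb ⊆ contingentCone (S ∩ {x | G x ⊆ C}) xb := by
  obtain ⟨α, hα, δ, hδ, hmi⟩ := hmi
  let K : ConvexCone ℝ Z := ⟨C, fun t ht z hz => hCcone t ht z hz, fun x hx y hy => by
    have half : (0 : ℝ) ≤ 1 / 2 := by norm_num
    simpa [← smul_add, smul_smul] using hCcone 2 two_pos _ (hCconv hx hy half half (by norm_num))⟩
  have hK : K.Pointed := hC0
  rintro v ⟨hvC, vn, tn, hvn, htn, htpos, hS⟩
  refine mem_contingentCone_of_eventually_infDist_le ⟨xb, hxbS, hxbG⟩ hvn htn htpos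
    fun ε hε => ?_
  have hsmall : ∀ᶠ n in atTop, ε * tn n < δ := by
    have : Tendsto (fun n => ε * tn n) atTop (𝓝 0) := by simpa using htn.const_mul ε
    exact this.eventually_lt_const hδ
  filter_upwards [hH.eventually_subset_enlarge (K := K) hHLip hxbG hvC hvn htn htpos
      (mul_pos (sub_pos.2 hα) hε), eventually_add_smul_mem_closedBall hvn htn hδ, hsmall]
    with n hGn hn hεn
  exact hmi.infDist_le (K := K) hCcl hK ⟨hn, hS n⟩ (hG _) ⟨mul_pos hε (htpos n), hεn⟩
    (by rwa [← mul_assoc])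

/-- inner tangential approximation of the solution set of a set-valued
inclusion via Lipschitz outer prederivatives (contingent cone version). -/
theorem statement_9
    {X Z : Type*} [NormedAddCommGroup X] [NormedSpace ℝ X] [CompleteSpace X]
    [NormedAddCommGroup Z] [NormedSpace ℝ Z] [CompleteSpace Z]
    (S : Set X) (hSne : S.Nonempty) (hScl : IsClosed S)
    (C : Set Z) (hCcl : IsClosed C) (hCconv : Convex ℝ C)
    (hCcone : ∀ t : ℝ, 0 < t → ∀ z ∈ C, t • z ∈ C) (hC0 : (0:Z) ∈ C)
    (hCne0 : C ≠ {0}) (hCneuniv : C ≠ Set.univ)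
    (G : X → Set Z) (hG : ∀ x, (G x).Nonempty)
    (xb : X) (hxbS : xb ∈ S) (hxbG : G xb ⊆ C)
    (hlsc : LscAround G xb) (hmi : MetIncr G S C xb)
    (H : X → Set Z) (hH : OuterPrederivAt G H xb) (hHLip : HausLipschitz H) :
    upperInv H C ∩ contingentCone S xb ⊆ contingentCone (S ∩ {x | G x ⊆ C}) xb :=
  statement_9_general S C hCcl hCconv hCcone hC0 G hG xb hxbS hxbG hmi H hH hHLip
end

section
/- Let X, Y, Z be real Banach spaces, K ⊆ Y a convex cone with nonempty interior, S ⊆ X a nonempty closed set, C ⊆ Z a proper closed convex cone with C ≠ {0}, f : X → Y, and G : X ⇉ Z with G(x) ≠ ∅ for all x. Let R = S ∩ {x : G(x) ⊆ C} and let x̄ ∈ R be a locally weakly efficient solution of minimizing f over R. Suppose that (i) f is B-differentiable at x̄ with B-derivative Bf(x̄;·); (ii) G is lower semicontinuous at every point of some ball around x̄ and is metrically C-increasing around x̄ relative to S; (iii) G admits a positively homogeneous set-valued mapping H as an outer prederivative at x̄. Then Bf(x̄; v) ∉ −int K for every v ∈ H⁺¹(C) ∩ WI(S,x̄), where H⁺¹(C)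 = {v : H(v) ⊆ C} and WI(S,x̄) is the weak feasible direction cone. -/
open Filter Topology Metric Set Pointwise
open scoped ENNReal NNReal

/-!
The classical primal condition holds on the contingent cone of the feasible set `R`: if
`xb + tₙ • vₙ ∈ R` with `vₙ → v`, `tₙ → 0⁺`, then `(f xb - f (xb + tₙ • vₙ)) / tₙ → -Bf v`, so
`-Bf v ∈ int K` would contradict local weak efficiency. It therefore suffices to show that
`H⁺¹(C) ∩ WI(S, xb)` lies in that cone. Metric `C`-increase and lower semicontinuity give the error
bound `dist(x, R) ≤ sup_{z ∈ G x} dist(z, C) / (α - 1)` for `x ∈ S` near `xb`. Along a weakly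
feasible direction `v` with `H v ⊆ C`, the outer prederivative makes this violation `o(t)` at
`xb + t • v`, so `R` contains points `xb + t • u` with `u` arbitrarily close to `v`.
-/

section DistanceToCone

variable {Z : Type*} [NormedAddCommGroup Z] {C : Set Z}

theorem Convex.add_mem_of_smul_mem [NormedSpace ℝ Z] (hCconv : Convex ℝ C)
    (hCcone : ∀ t : ℝ, 0 < t → ∀ z ∈ C, t • z ∈ C) {a b : Z} (ha : a ∈ C) (hb : b ∈ C) :
    a + b ∈ C := by
  have hmid := hCconv ha hb (by norm_num : (0:ℝ) ≤ 1/2) (by norm_num : (0:ℝ) ≤ 1/2) (by norm_num)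
  convert hCcone 2 two_pos _ hmid using 1
  rw [smul_add, smul_smul, smul_smul]
  norm_num

theorem infDist_add_le_of_add_mem (hCadd : ∀ a ∈ C, ∀ b ∈ C, a + b ∈ C) (hCne : C.Nonempty)
    (z : Z) {c : Z} (hc : c ∈ C) : infDist (z + c) C ≤ infDist z C := by
  refine (le_infDist hCne).2 fun c' hc' => ?_
  calc infDist (z + c) C ≤ dist (z + c) (c' + c) := infDist_le_dist_of_mem (hCadd c' hc' c hc)
    _ = dist z c' := dist_add_right z c' c

theorem infDist_le_infDist_add_of_forall_infDist_le (hCadd : ∀ a ∈ C, ∀ b ∈ C, a + b ∈ C)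
    (hCne : C.Nonempty) {A : Set Z} (hA : A.Nonempty) {b : ℝ}
    (hbound : ∀ a ∈ A, infDist a C ≤ b) (p : Z) :
    infDist p C ≤ infDist p (A + C) + b := by
  rw [← sub_le_iff_le_add]
  refine (le_infDist (hA.add hCne)).2 ?_
  rintro _ ⟨a, ha, c, hc, rfl⟩
  have := infDist_le_infDist_add_dist (x := p) (y := a + c) (s := C)
  linarith [infDist_add_le_of_add_mem hCadd hCne a hc, hbound a ha]

theorem Convex.mul_infDist_le_infDist_add_smul_sub [NormedSpace ℝ Z] (hCconv : Convex ℝ C)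
    {c : Z} (hc : c ∈ C) (z : Z) {τ : ℝ} (hτ : 0 ≤ τ) :
    (1 + τ) * infDist z C ≤ infDist (z + τ • (z - c)) C := by
  refine (le_infDist ⟨c, hc⟩).2 fun c' hc' => ?_
  have hτ1 : 0 < 1 + τ := by linarith
  set q := (1 + τ)⁻¹ • c' + (τ / (1 + τ)) • c
  have hq : q ∈ C := hCconv hc' hc (by positivity) (by positivity) (by field_simp)
  have hscale : z + τ • (z - c) - c' = (1 + τ) • (z - q) := by
    simp only [q, smul_sub, smul_add, smul_smul]
    rw [mul_inv_cancel₀ hτ1.ne', mul_div_cancel₀ _ hτ1.ne']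
    module
  calc (1 + τ) * infDist z C ≤ (1 + τ) * dist z q := by gcongr; exact infDist_le_dist_of_mem hq
    _ = dist (z + τ • (z - c)) c' := by
      rw [dist_eq_norm, dist_eq_norm, hscale, norm_smul, Real.norm_of_nonneg hτ1.le]

theorem infDist_le_sub_of_enlarge_subset [NormedSpace ℝ Z] (hCconv : Convex ℝ C)
    (hCadd : ∀ a ∈ C, ∀ b ∈ C, a + b ∈ C) (hCne : C.Nonempty) {A A' : Set Z} (hA : A.Nonempty)
    {α r b : ℝ} (hα : 0 < α) (hr : 0 < r) (hbr : (α - 1) * r ≤ b)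
    (hbound : ∀ a ∈ A, infDist a C ≤ b) (hinc : enlarge A' (α * r) ⊆ enlarge (A + C) r)
    {z : Z} (hz : z ∈ A') : infDist z C ≤ b - (α - 1) * r := by
  set d := infDist z C
  rcases (infDist_nonneg : 0 ≤ d).eq_or_lt with hd | hd
  · rw [show d = 0 from hd.symm]; linarith
  have key : ∀ c ∈ C, α * r * d ≤ (r + b - d) * dist z c := by
    intro c hc
    have hs0 : 0 < dist z c := hd.trans_le (infDist_le_dist_of_mem hc)
    -- `p` lies in `enlarge A' (α * r)`, and pushing away from `c` has increased its distance to `C`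
    set p := z + (α * r / dist z c) • (z - c)
    have hpA' : infDist p A' ≤ α * r := by
      refine (infDist_le_dist_of_mem hz).trans_eq ?_
      rw [dist_eq_norm, show p - z = (α * r / dist z c) • (z - c) by simp [p], norm_smul,
        ← dist_eq_norm, Real.norm_of_nonneg (by positivity), div_mul_cancel₀ _ hs0.ne']
    have hlow := hCconv.mul_infDist_le_infDist_add_smul_sub hc z (τ := α * r / dist z c)
      (by positivity)
    have hup := infDist_le_infDist_add_of_forall_infDist_le hCadd hCne hA hbound p
    have hpAC : infDist p (A + C) ≤ r := hinc hpA'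
    have : (1 + α * r / dist z c) * d ≤ r + b := by linarith
    rw [add_mul, one_mul, div_mul_eq_mul_div, ← le_sub_iff_add_le', div_le_iff₀ hs0] at this
    linarith
  obtain ⟨c, hc⟩ := hCne
  have hpos : 0 < r + b - d := by
    have hαrd : 0 < α * r * d := by positivity
    nlinarith [key c hc, infDist_le_dist_of_mem (x := z) hc]
  have : α * r * d / (r + b - d) ≤ d :=
    (le_infDist ⟨c, hc⟩).2 fun c' hc' => (div_le_iff₀ hpos).2 (by linarith [key c' hc'])
  rw [div_le_iff₀ hpos] at this
  nlinarith

end DistanceToCone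

theorem exists_tendsto_of_forall_exists_dist_le_geometric_two {E : Type*} [PseudoMetricSpace E]
    [CompleteSpace E] {P : ℕ → E → Prop} {c : ℝ} {x₀ : E} (h₀ : P 0 x₀)
    (hstep : ∀ k x, P k x → ∃ x', P (k + 1) x' ∧ dist x x' ≤ c / 2 / 2 ^ k) :
    ∃ u : ℕ → E, ∃ y, (∀ k, P k (u k)) ∧ Tendsto u atTop (𝓝 y) ∧ dist x₀ y ≤ c := by
  choose! F hFP hFdist using hstep
  let u : ℕ → E := fun k => Nat.rec x₀ F k
  have hu : ∀ k, P k (u k) := fun k => by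
    induction k with
    | zero => exact h₀
    | succ k ih => exact hFP k (u k) ih
  have hdist : ∀ k, dist (u k) (u (k + 1)) ≤ c / 2 / 2 ^ k := fun k => hFdist k (u k) (hu k)
  obtain ⟨y, hy⟩ := cauchySeq_tendsto_of_complete (cauchySeq_of_le_geometric_two hdist)
  exact ⟨u, y, hu, hy, dist_le_of_le_geometric_two_of_tendsto₀ hdist hy⟩

theorem LscAt.subset_of_tendsto {X Z : Type*} [TopologicalSpace X] [PseudoMetricSpace Z]
    {G : X → Set Z} {C : Set Z} (hCcl : IsClosed C) (hCne : C.Nonempty) {y : X}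
    (hG : LscAt G y) {ι : Type*} {l : Filter ι} [l.NeBot] {u : ι → X} {β : ι → ℝ}
    (hu : Tendsto u l (𝓝 y)) (hβ : Tendsto β l (𝓝 0))
    (hbound : ∀ i, ∀ z ∈ G (u i), infDist z C ≤ β i) : G y ⊆ C := by
  intro z hz
  rw [hCcl.mem_iff_infDist_zero hCne]
  refine le_antisymm ?_ infDist_nonneg
  by_contra! hpos
  obtain ⟨U, hU, hGU⟩ := hG {w | infDist z C / 2 < infDist w C}
    (isOpen_lt continuous_const (continuous_infDist_pt C)) ⟨z, hz, by simpa using hpos⟩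
  obtain ⟨i, hiU, hiβ⟩ :=
    ((hu.eventually_mem hU).and (hβ.eventually (gt_mem_nhds (half_pos hpos)))).exists
  obtain ⟨w, hwG, hwV⟩ := hGU (u i) hiU
  exact (hwV.trans_le (hbound i w hwG)).not_gt hiβ

theorem MetIncrWith.mono {X Z : Type*} [SeminormedAddCommGroup X] [SeminormedAddCommGroup Z]
    {G : X → Set Z} {S : Set X} {C : Set Z} {xb : X} {α δ δ' : ℝ}
    (h : MetIncrWith G S C xb α δ) (hδ : δ' ≤ δ) : MetIncrWith G S C xb α δ' :=
  fun x hx r hr => h x ⟨closedBall_subset_closedBall hδ hx.1, hx.2⟩ r ⟨hr.1, hr.2.trans_le hδ⟩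

/-- Iterating the metric increase with radii `β / 2 ^ (k + 1)` halves the distance of the image
to `C` at each step; lower semicontinuity passes `G y ⊆ C` on to the limit `y`. -/
theorem MetIncrWith.exists_feasible_dist_le {X Z : Type*} [NormedAddCommGroup X] [CompleteSpace X]
    [NormedAddCommGroup Z] [NormedSpace ℝ Z]
    {S : Set X} (hScl : IsClosed S) {C : Set Z} (hCcl : IsClosed C) (hCconv : Convex ℝ C)
    (hCadd : ∀ a ∈ C, ∀ b ∈ C, a + b ∈ C) (hCne : C.Nonempty)
    {G : X → Set Z} (hG : ∀ x, (G x).Nonempty) {xb : X} {α δ : ℝ}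
    (hmi : MetIncrWith G S C xb α δ) (hα : 1 < α) (hlsc : ∀ x ∈ closedBall xb δ, LscAt G x)
    {x₀ : X} (hx₀ : x₀ ∈ S) {β : ℝ} (hβ : 0 < β)
    (hbound : ∀ z ∈ G x₀, infDist z C ≤ (α - 1) * β) (hfit : ‖x₀ - xb‖ + β ≤ δ) :
    ∃ y ∈ S, G y ⊆ C ∧ dist x₀ y ≤ β := by
  set P : ℕ → X → Prop := fun k x => x ∈ S ∧ ‖x - xb‖ + β / 2 ^ k ≤ δ ∧
    ∀ z ∈ G x, infDist z C ≤ (α - 1) * (β / 2 ^ k)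
  have hstep : ∀ k x, P k x → ∃ x', P (k + 1) x' ∧ dist x x' ≤ β / 2 / 2 ^ k := by
    rintro k x ⟨hxS, hxfit, hxbound⟩
    have hβk : 0 < β / 2 ^ k := by positivity
    have hr : β / 2 / 2 ^ k = β / 2 ^ k / 2 := div_right_comm _ _ _
    have hhalf : β / 2 ^ (k + 1) = β / 2 ^ k / 2 := by rw [pow_succ, div_div]
    obtain ⟨x', ⟨hx'x, hx'S⟩, hinc⟩ := hmi x ⟨by
        rw [mem_closedBall, dist_eq_norm]; linarith, hxS⟩ (β / 2 ^ k / 2)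
      ⟨by positivity, by linarith [norm_nonneg (x - xb)]⟩
    have hx'x : ‖x' - x‖ ≤ β / 2 ^ k / 2 := by rwa [mem_closedBall, dist_eq_norm] at hx'x
    refine ⟨x', ⟨hx'S, ?_, fun z hz => ?_⟩, ?_⟩
    · linarith [norm_sub_le_norm_sub_add_norm_sub x' x xb]
    · have := infDist_le_sub_of_enlarge_subset hCconv hCadd hCne (hG x) (by linarith)
        (by positivity) (by nlinarith) hxbound hinc hz
      rw [hhalf]; linarith
    · rw [dist_comm, dist_eq_norm, hr]; exact hx'x
  obtain ⟨u, y, hu, hy, hx₀y⟩ := exists_tendsto_of_forall_exists_dist_le_geometric_two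
    (P := P) ⟨hx₀, by simpa using hfit, by simpa using hbound⟩ hstep
  have hyS : y ∈ S := hScl.mem_of_tendsto hy (Eventually.of_forall fun k => (hu k).1)
  have hyδ : y ∈ closedBall xb δ := by
    rw [mem_closedBall]
    linarith [dist_triangle y x₀ xb, dist_comm x₀ y, dist_eq_norm x₀ xb]
  have hβk : Tendsto (fun k : ℕ => (α - 1) * (β / 2 ^ k)) atTop (𝓝 0) := by
    simpa using (tendsto_const_nhds.div_atTop
      (tendsto_pow_atTop_atTop_of_one_lt one_lt_two)).const_mul (α - 1)
  exact ⟨y, hyS, (hlsc y hyδ).subset_of_tendsto hCcl hCne hy hβk fun k => (hu k).2.2, hx₀y⟩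

section Tangents

variable {X : Type*} [NormedAddCommGroup X] [NormedSpace ℝ X]

theorem OuterPrederivAt.infDist_le_of_mem_upperInv {Z : Type*} [NormedAddCommGroup Z]
    [NormedSpace ℝ Z] {G H : X → Set Z} {xb : X} (hH : OuterPrederivAt G H xb) {C : Set Z}
    (hCcone : ∀ t : ℝ, 0 < t → ∀ z ∈ C, t • z ∈ C) (hCadd : ∀ a ∈ C, ∀ b ∈ C, a + b ∈ C)
    (hxbG : G xb ⊆ C) {v : X} (hv : v ∈ upperInv H C) {ε : ℝ} (hε : 0 < ε) :
    ∃ δ > 0, ∀ t, 0 < t → t ≤ δ → ∀ z ∈ G (xb + t • v), infDist z C ≤ ε * t := by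
  have hv1 : 0 < ‖v‖ + 1 := by positivity
  obtain ⟨δ, hδ, hpre⟩ := hH.2 (ε / (‖v‖ + 1)) (by positivity)
  refine ⟨δ / (‖v‖ + 1), by positivity, fun t ht htδ z hz => ?_⟩
  have htv : ‖xb + t • v - xb‖ = t * ‖v‖ := by
    rw [add_sub_cancel_left, norm_smul, Real.norm_of_nonneg ht.le]
  have hball : xb + t • v ∈ closedBall xb δ := by
    rw [mem_closedBall, dist_eq_norm, htv]
    rw [le_div_iff₀ hv1] at htδ
    nlinarith
  obtain ⟨_, ⟨g, hg, h, hh, rfl⟩, w, hw, rfl⟩ := hpre _ hball hz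
  rw [add_sub_cancel_left, hH.1 t ht v] at hh
  obtain ⟨h, hh, rfl⟩ := hh
  have hgh : g + t • h ∈ C := hCadd g (hxbG hg) _ (hCcone t ht h (hv hh))
  rw [mem_closedBall_zero_iff, htv] at hw
  calc infDist (g + t • h + w) C ≤ dist (g + t • h + w) (g + t • h) := infDist_le_dist_of_mem hgh
    _ = ‖w‖ := by rw [dist_eq_norm, add_sub_cancel_left]
    _ ≤ ε / (‖v‖ + 1) * (t * ‖v‖) := hw
    _ ≤ ε * t := by
      rw [div_mul_eq_mul_div, div_le_iff₀ hv1]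
      nlinarith [mul_pos hε ht]

theorem mem_contingentCone_of_forall_exists {A : Set X} {xb v : X}
    (h : ∀ σ > 0, ∃ t ∈ Ioo 0 σ, ∃ u, ‖u - v‖ ≤ σ ∧ xb + t • u ∈ A) :
    v ∈ contingentCone A xb := by
  choose t ht u hu hA using fun n : ℕ => h (1 / (n + 1)) Nat.one_div_pos_of_nat
  refine ⟨u, t, ?_, ?_, fun n => (ht n).1, hA⟩
  · rw [tendsto_iff_norm_sub_tendsto_zero]
    exact squeeze_zero (fun _ => norm_nonneg _) hu tendsto_one_div_add_atTop_nhds_zero_nat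
  · exact squeeze_zero (fun n => (ht n).1.le) (fun n => (ht n).2.le)
      tendsto_one_div_add_atTop_nhds_zero_nat

theorem upperInv_inter_weakFeasDirCone_subset_contingentCone [CompleteSpace X]
    {Z : Type*} [NormedAddCommGroup Z] [NormedSpace ℝ Z]
    {S : Set X} (hScl : IsClosed S) {C : Set Z} (hCcl : IsClosed C) (hCconv : Convex ℝ C)
    (hCcone : ∀ t : ℝ, 0 < t → ∀ z ∈ C, t • z ∈ C) (hC0 : (0 : Z) ∈ C)
    {G : X → Set Z} (hG : ∀ x, (G x).Nonempty) {xb : X} (hxbG : G xb ⊆ C)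
    (hlsc : LscAround G xb) (hmi : MetIncr G S C xb) {H : X → Set Z}
    (hH : OuterPrederivAt G H xb) :
    upperInv H C ∩ weakFeasDirCone S xb ⊆ contingentCone (S ∩ {x | G x ⊆ C}) xb := by
  rintro v ⟨hvH, hvS⟩
  have hCadd : ∀ a ∈ C, ∀ b ∈ C, a + b ∈ C :=
    fun _ ha _ hb => hCconv.add_mem_of_smul_mem hCcone ha hb
  obtain ⟨α, hα, δm, hδm, hmiW⟩ := hmi
  obtain ⟨ρ, hρ, hlscB⟩ := hlsc
  set δ := min δm ρ
  have hlsc' : ∀ x ∈ closedBall xb δ, LscAt G x :=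
    fun x hx => hlscB x (closedBall_subset_closedBall (min_le_right _ _) hx)
  refine mem_contingentCone_of_forall_exists fun σ hσ => ?_
  obtain ⟨δH, hδH, hbound⟩ :=
    hH.infDist_le_of_mem_upperInv hCcone hCadd hxbG hvH (mul_pos hσ (sub_pos.2 hα))
  obtain ⟨t, ⟨ht, htT⟩, htS⟩ := hvS (min σ (min δH (δ / (‖v‖ + σ))))
    (lt_min hσ (lt_min hδH (by positivity)))
  have htσ : t < σ := htT.trans_le (min_le_left _ _)
  have htδH : t ≤ δH := htT.le.trans ((min_le_right _ _).trans (min_le_left _ _))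
  have htδ : t * (‖v‖ + σ) ≤ δ := by
    rw [← le_div_iff₀ (by positivity)]
    exact htT.le.trans ((min_le_right _ _).trans (min_le_right _ _))
  obtain ⟨y, hyS, hyG, hdist⟩ := (hmiW.mono (min_le_left _ _)).exists_feasible_dist_le
    hScl hCcl hCconv hCadd ⟨0, hC0⟩ hG hα hlsc' htS (mul_pos hσ ht)
    (fun z hz => (hbound t ht htδH z hz).trans_eq (by ring))
    (by rw [add_sub_cancel_left, norm_smul, Real.norm_of_nonneg ht.le]; linarith)
  refine ⟨t, ⟨ht, htσ⟩, t⁻¹ • (y - xb), ?_, ?_⟩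
  · have hyx : t⁻¹ • (y - xb) - v = t⁻¹ • (y - (xb + t • v)) := by
      rw [smul_sub, smul_sub, smul_add, inv_smul_smul₀ ht.ne']; abel
    rw [hyx, norm_smul, Real.norm_of_nonneg (inv_nonneg.2 ht.le), ← dist_eq_norm, dist_comm,
      inv_mul_le_iff₀ ht, mul_comm]
    exact hdist
  · rw [smul_inv_smul₀ ht.ne', add_sub_cancel]
    exact ⟨hyS, hyG⟩

end Tangents

theorem tendsto_add_smul_of_tendsto_zero {X : Type*} [NormedAddCommGroup X] [NormedSpace ℝ X]
    {xb v : X} {u : ℕ → X} {t : ℕ → ℝ} (hu : Tendsto u atTop (𝓝 v)) (ht : Tendsto t atTop (𝓝 0)) :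
    Tendsto (fun n => xb + t n • u n) atTop (𝓝 xb) := by
  simpa using tendsto_const_nhds.add (ht.smul hu)

theorem smul_mem_interior_of_forall_smul_mem {Y : Type*} [NormedAddCommGroup Y]
    [NormedSpace ℝ Y] {K : Set Y} (hKcone : ∀ t : ℝ, 0 < t → ∀ y ∈ K, t • y ∈ K) {t : ℝ}
    (ht : 0 < t) {y : Y} (hy : y ∈ interior K) : t • y ∈ interior K := by
  have hty : t • y ∈ interior (t • K) := by
    rw [interior_smul₀ ht.ne']
    exact smul_mem_smul_set hy
  exact interior_mono (by rintro _ ⟨k, hk, rfl⟩; exact hKcone t ht k hk) hty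

namespace IsBDerivAt

variable {X Y : Type*} [NormedAddCommGroup X] [NormedSpace ℝ X] [NormedAddCommGroup Y]
  [NormedSpace ℝ Y] {f Bf : X → Y} {xb : X}

theorem map_zero (hBf : IsBDerivAt f Bf xb) : Bf 0 = 0 := by
  have h := hBf.2.1 2 two_pos 0
  rw [smul_zero, two_smul] at h
  exact left_eq_add.mp h

theorem tendsto_remainder (hBf : IsBDerivAt f Bf xb) :
    Tendsto (fun x => ‖x - xb‖⁻¹ • (f x - f xb - Bf (x - xb))) (𝓝 xb) (𝓝 0) := by
  have hcont : ContinuousWithinAt (fun x => ‖x - xb‖⁻¹ • (f x - f xb - Bf (x - xb)))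
      {xb}ᶜ xb := by
    simpa [ContinuousWithinAt] using hBf.2.2
  exact continuousWithinAt_compl_self.1 hcont |>.tendsto.trans_eq (by simp)

theorem tendsto_smul_sub (hBf : IsBDerivAt f Bf xb) {v : X} {u : ℕ → X} {t : ℕ → ℝ}
    (hu : Tendsto u atTop (𝓝 v)) (ht : Tendsto t atTop (𝓝 0)) (htpos : ∀ n, 0 < t n) :
    Tendsto (fun n => (t n)⁻¹ • (f (xb + t n • u n) - f xb)) atTop (𝓝 (Bf v)) := by
  set ρ := fun x => ‖x - xb‖⁻¹ • (f x - f xb - Bf (x - xb))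
  have hexpand : ∀ n, (t n)⁻¹ • (f (xb + t n • u n) - f xb) =
      Bf (u n) + ‖u n‖ • ρ (xb + t n • u n) := by
    intro n
    have htn := (htpos n).ne'
    rcases eq_or_ne (u n) 0 with hun | hun
    · simp [hun, ρ, hBf.map_zero]
    have hrem : ‖u n‖ • ρ (xb + t n • u n) =
        (t n)⁻¹ • (f (xb + t n • u n) - f xb - t n • Bf (u n)) := by
      simp only [ρ, add_sub_cancel_left, norm_smul, Real.norm_of_nonneg (htpos n).le,
        hBf.2.1 _ (htpos n), smul_smul]
      congr 1
      field_simp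
    rw [hrem, smul_sub _ _ (t n • Bf (u n)), inv_smul_smul₀ htn]
    abel
  have hlim := ((hBf.1.tendsto v).comp hu).add ((continuous_norm.tendsto v).comp hu |>.smul
    (hBf.tendsto_remainder.comp (tendsto_add_smul_of_tendsto_zero hu ht)))
  rw [smul_zero, add_zero] at hlim
  exact hlim.congr fun n => (hexpand n).symm

theorem neg_notMem_interior_of_mem_contingentCone (hBf : IsBDerivAt f Bf xb) {K : Set Y}
    (hKcone : ∀ t : ℝ, 0 < t → ∀ y ∈ K, t • y ∈ K) {R : Set X} (hweff : LocWeakEffOn f R K xb)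
    {v : X} (hv : v ∈ contingentCone R xb) : -Bf v ∉ interior K := by
  intro hvK
  obtain ⟨δ, hδ, hweff⟩ := hweff
  obtain ⟨u, t, hu, ht, htpos, hR⟩ := hv
  have hquot : Tendsto (fun n => (t n)⁻¹ • (f xb - f (xb + t n • u n))) atTop (𝓝 (-Bf v)) := by
    refine (hBf.tendsto_smul_sub hu ht htpos).neg.congr fun n => ?_
    rw [← smul_neg, neg_sub]
  obtain ⟨n, hnK, hnδ⟩ := ((hquot.eventually (isOpen_interior.mem_nhds hvK)).and
    ((tendsto_add_smul_of_tendsto_zero hu ht).eventually (closedBall_mem_nhds xb hδ))).exists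
  refine hweff _ ⟨hR n, hnδ⟩ ?_
  rw [← smul_inv_smul₀ (htpos n).ne' (f xb - _)]
  exact smul_mem_interior_of_forall_smul_mem hKcone (htpos n) hnK

end IsBDerivAt

theorem statement_10_general
    {X Y Z : Type*} [NormedAddCommGroup X] [NormedSpace ℝ X] [CompleteSpace X]
    [NormedAddCommGroup Y] [NormedSpace ℝ Y]
    [NormedAddCommGroup Z] [NormedSpace ℝ Z]
    (K : Set Y)
    (hKcone : ∀ t : ℝ, 0 < t → ∀ y ∈ K, t • y ∈ K)
    (S : Set X) (hScl : IsClosed S)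
    (C : Set Z) (hCcl : IsClosed C) (hCconv : Convex ℝ C)
    (hCcone : ∀ t : ℝ, 0 < t → ∀ z ∈ C, t • z ∈ C) (hC0 : (0:Z) ∈ C)
    (f : X → Y) (G : X → Set Z) (hG : ∀ x, (G x).Nonempty)
    (xb : X) (hxbG : G xb ⊆ C)
    (hweff : LocWeakEffOn f (S ∩ {x | G x ⊆ C}) K xb)
    (Bf : X → Y) (hBf : IsBDerivAt f Bf xb)
    (hlsc : LscAround G xb) (hmi : MetIncr G S C xb)
    (H : X → Set Z) (hH : OuterPrederivAt G H xb) :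
    ∀ v ∈ upperInv H C ∩ weakFeasDirCone S xb, -Bf v ∉ interior K := fun _ hv =>
  hBf.neg_notMem_interior_of_mem_contingentCone hKcone hweff
    (upperInv_inter_weakFeasDirCone_subset_contingentCone hScl hCcl hCconv hCcone hC0 hG hxbG
      hlsc hmi hH hv)

/-- primal first-order necessary condition for local weak efficiency. -/
theorem statement_10
    {X Y Z : Type*} [NormedAddCommGroup X] [NormedSpace ℝ X] [CompleteSpace X]
    [NormedAddCommGroup Y] [NormedSpace ℝ Y] [CompleteSpace Y]
    [NormedAddCommGroup Z] [NormedSpace ℝ Z] [CompleteSpace Z]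
    (K : Set Y) (hKconv : Convex ℝ K)
    (hKcone : ∀ t : ℝ, 0 < t → ∀ y ∈ K, t • y ∈ K) (hKint : (interior K).Nonempty)
    (S : Set X) (hSne : S.Nonempty) (hScl : IsClosed S)
    (C : Set Z) (hCcl : IsClosed C) (hCconv : Convex ℝ C)
    (hCcone : ∀ t : ℝ, 0 < t → ∀ z ∈ C, t • z ∈ C) (hC0 : (0:Z) ∈ C)
    (hCne0 : C ≠ {0}) (hCneuniv : C ≠ Set.univ)
    (f : X → Y) (G : X → Set Z) (hG : ∀ x, (G x).Nonempty)
    (xb : X) (hxbS : xb ∈ S) (hxbG : G xb ⊆ C)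
    (hweff : LocWeakEffOn f (S ∩ {x | G x ⊆ C}) K xb)
    (Bf : X → Y) (hBf : IsBDerivAt f Bf xb)
    (hlsc : LscAround G xb) (hmi : MetIncr G S C xb)
    (H : X → Set Z) (hH : OuterPrederivAt G H xb) :
    ∀ v ∈ upperInv H C ∩ weakFeasDirCone S xb, -Bf v ∉ interior K :=
  statement_10_general K hKcone S hScl C hCcl hCconv hCcone hC0 f G hG xb hxbG hweff Bf hBf hlsc hmi
    H hH
end
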